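/- arXiv:2501.10540 — 3 statements merged into one kernel-verified Lean document; each statement's English description precedes it below -/
import Mathlib

section
/- Let σ₁₁ > 0, σ₂₂ > 0, and let A, s₁₁, s₁₂, s₂₂, C be real numbers. For t ∈ ℝ with t² < σ₁₁σ₂₂, define η(t) = C − (A/2) log(σ₂₂ − t²/σ₁₁) − (s₂₂ − 2(t/σ₁₁) s₁₂ + (t²/σ₁₁²) s₁₁) / (2(σ₂₂ − t²/σ₁₁)), and define the cubic polynomial P(t) = s₁₂ σ₁₁ σ₂₂ + (σ₁₁ σ₂₂ A − s₂₂ σ₁₁ − s₁₁ σ₂₂) t + s₁₂ t² − A t³. Then for every t with t² < σ₁₁σ₂₂, η is differentiable at t and η′(t) = P(t) / (σ₁₁ σ₂₂ − t²)². -/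
/-!
Write `u(t) = σ₂₂ − t²/σ₁₁ = (σ₁₁σ₂₂ − t²)/σ₁₁`, the Schur complement, which is nonzero on the
region `t² < σ₁₁σ₂₂`. Then `η = C − (A/2) log u − Q/(2u)` with `Q` quadratic in `t`, so the chain
and quotient rules give `η′` as a rational function with denominator `σ₁₁²u² = (σ₁₁σ₂₂ − t²)²`;
clearing denominators identifies its numerator with `P(t)`.
-/

lemma schur_complement_eq_div {σ11 : ℝ} (h : σ11 ≠ 0) (σ22 t : ℝ) :
    σ22 - t ^ 2 / σ11 = (σ11 * σ22 - t ^ 2) / σ11 := by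
  field_simp

lemma hasDerivAt_schur_complement (σ11 σ22 t : ℝ) :
    HasDerivAt (fun t : ℝ => σ22 - t ^ 2 / σ11) (-(2 * t / σ11)) t :=
  (((hasDerivAt_pow 2 t).div_const σ11).const_sub σ22).congr_deriv (by ring)

lemma hasDerivAt_quadratic_numerator (σ11 s11 s12 s22 t : ℝ) :
    HasDerivAt (fun t : ℝ => s22 - 2 * (t / σ11) * s12 + (t ^ 2 / σ11 ^ 2) * s11)
      (2 * t / σ11 ^ 2 * s11 - 2 / σ11 * s12) t := by
  have hlin := ((((hasDerivAt_id t).div_const σ11).const_mul 2).mul_const s12).const_sub s22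
  have hquad := ((hasDerivAt_pow 2 t).div_const (σ11 ^ 2)).mul_const s11
  exact (hlin.add hquad).congr_deriv (by ring)

lemma HasDerivAt.const_sub_mul_log_sub_div {u N : ℝ → ℝ} {u' N' t : ℝ}
    (hu : HasDerivAt u u' t) (hN : HasDerivAt N N' t) (hut : u t ≠ 0) (C a : ℝ) :
    HasDerivAt (fun t => C - a * Real.log (u t) - N t / (2 * u t))
      (-(a * (u' / u t)) - (N' * (2 * u t) - N t * (2 * u')) / (2 * u t) ^ 2) t := by
  have hlog := ((hu.log hut).const_mul a).const_sub C
  exact hlog.sub (hN.div (hu.const_mul 2) (mul_ne_zero two_ne_zero hut))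

theorem deriv_eta_eq_P_div_general (σ11 σ22 A s11 s12 s22 C : ℝ) :
    ∀ t : ℝ, t ^ 2 < σ11 * σ22 →
      HasDerivAt (fun t : ℝ =>
          C - (A / 2) * Real.log (σ22 - t ^ 2 / σ11)
            - (s22 - 2 * (t / σ11) * s12 + (t ^ 2 / σ11 ^ 2) * s11)
              / (2 * (σ22 - t ^ 2 / σ11)))
        ((s12 * σ11 * σ22 + (σ11 * σ22 * A - s22 * σ11 - s11 * σ22) * t
            + s12 * t ^ 2 - A * t ^ 3) / (σ11 * σ22 - t ^ 2) ^ 2) t := by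
  intro t ht
  have hdet : σ11 * σ22 - t ^ 2 ≠ 0 := (sub_pos.mpr ht).ne'
  have h11 : σ11 ≠ 0 := by
    rintro rfl
    nlinarith [sq_nonneg t]
  have hschur : σ22 - t ^ 2 / σ11 ≠ 0 := by
    rw [schur_complement_eq_div h11]
    exact div_ne_zero hdet h11
  convert (hasDerivAt_schur_complement σ11 σ22 t).const_sub_mul_log_sub_div
    (hasDerivAt_quadratic_numerator σ11 s11 s12 s22 t) hschur C (A / 2) using 1
  rw [schur_complement_eq_div h11]
  field_simp
  ring

/-- Derivative of the profile log-likelihood `η` of Theorems 1–4: on the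
positive-definiteness region `t² < σ₁₁σ₂₂`, `η` is differentiable with
`η′(t) = P(t) / (σ₁₁σ₂₂ − t²)²`, where `P` is the cubic polynomial of the paper. -/
theorem deriv_eta_eq_P_div (σ11 σ22 A s11 s12 s22 C : ℝ)
    (h11 : 0 < σ11) (h22 : 0 < σ22) :
    ∀ t : ℝ, t ^ 2 < σ11 * σ22 →
      HasDerivAt (fun t : ℝ =>
          C - (A / 2) * Real.log (σ22 - t ^ 2 / σ11)
            - (s22 - 2 * (t / σ11) * s12 + (t ^ 2 / σ11 ^ 2) * s11)
              / (2 * (σ22 - t ^ 2 / σ11)))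
        ((s12 * σ11 * σ22 + (σ11 * σ22 * A - s22 * σ11 - s11 * σ22) * t
            + s12 * t ^ 2 - A * t ^ 3) / (σ11 * σ22 - t ^ 2) ^ 2) t :=
  deriv_eta_eq_P_div_general σ11 σ22 A s11 s12 s22 C
end

section
/- Let σ₁₁ > 0, σ₂₂ > 0, and let A, s₁₁, s₁₂, s₂₂, C be real numbers. For t ∈ ℝ with t² < σ₁₁σ₂₂, define η(t) = C − (A/2) log(σ₂₂ − t²/σ₁₁) − (s₂₂ − 2(t/σ₁₁) s₁₂ + (t²/σ₁₁²) s₁₁) / (2(σ₂₂ − t²/σ₁₁)), and define the cubic polynomial P(t) = s₁₂ σ₁₁ σ₂₂ + (σ₁₁ σ₂₂ A − s₂₂ σ₁₁ − s₁₁ σ₂₂) t + s₁₂ t² − A t³. Then for every t ∈ (−√(σ₁₁σ₂₂), √(σ₁₁σ₂₂)), η′(t) = 0 if and only if P(t) = 0. In particular, the stationary points of η inside the positive-definiteness region are exactly the roots of P lying in that interval. -/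
/-!
Since `σ₂₂ - t²/σ₁₁ = (σ₁₁σ₂₂ - t²)/σ₁₁`, the chain and quotient rules give
`η'(t) = P(t) / (σ₁₁σ₂₂ - t²)²` wherever `σ₁₁ ≠ 0` and `t² ≠ σ₁₁σ₂₂`. On the interval
`t² < σ₁₁σ₂₂` (which is empty when `σ₁₁ = 0`) the denominator does not vanish, so `η'(t) = 0`
exactly when `P(t) = 0`.
-/

open Real

noncomputable section

namespace ProfileLikelihood

variable (σ11 σ22 A s11 s12 s22 C : ℝ)

def eta (t : ℝ) : ℝ :=
  C - (A / 2) * log (σ22 - t ^ 2 / σ11)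
    - (s22 - 2 * (t / σ11) * s12 + (t ^ 2 / σ11 ^ 2) * s11) / (2 * (σ22 - t ^ 2 / σ11))

def cubic (t : ℝ) : ℝ :=
  s12 * σ11 * σ22 + (σ11 * σ22 * A - s22 * σ11 - s11 * σ22) * t + s12 * t ^ 2 - A * t ^ 3

variable {σ11 σ22 A s11 s12 s22 C}

theorem hasDerivAt_sub_sq_div (t : ℝ) :
    HasDerivAt (fun x ↦ σ22 - x ^ 2 / σ11) (-(2 * t / σ11)) t :=
  ((hasDerivAt_const t σ22).sub ((hasDerivAt_pow 2 t).div_const σ11)).congr_deriv (by ring)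

theorem hasDerivAt_quadForm (t : ℝ) :
    HasDerivAt (fun x ↦ s22 - 2 * (x / σ11) * s12 + (x ^ 2 / σ11 ^ 2) * s11)
      (2 * t * s11 / σ11 ^ 2 - 2 * s12 / σ11) t := by
  have hlin := (((hasDerivAt_id t).div_const σ11).const_mul 2).mul_const s12
  have hsq := ((hasDerivAt_pow 2 t).div_const (σ11 ^ 2)).mul_const s11
  exact (((hasDerivAt_const t s22).sub hlin).add hsq).congr_deriv (by ring)

theorem hasDerivAt_eta {t : ℝ} (hσ11 : σ11 ≠ 0) (ht : t ^ 2 ≠ σ11 * σ22) :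
    HasDerivAt (eta σ11 σ22 A s11 s12 s22 C)
      (cubic σ11 σ22 A s11 s12 s22 t / (σ11 * σ22 - t ^ 2) ^ 2) t := by
  have hD : σ11 * σ22 - t ^ 2 ≠ 0 := sub_ne_zero.2 ht.symm
  have hu : σ22 - t ^ 2 / σ11 = (σ11 * σ22 - t ^ 2) / σ11 := by field_simp
  have hu0 : σ22 - t ^ 2 / σ11 ≠ 0 := by rw [hu]; exact div_ne_zero hD hσ11
  have hlog := (hasDerivAt_sub_sq_div t).log hu0
  have hquot := hasDerivAt_quadForm (σ11 := σ11) (s11 := s11) (s12 := s12) (s22 := s22) t |>.div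
    ((hasDerivAt_sub_sq_div t).const_mul 2) (mul_ne_zero two_ne_zero hu0)
  refine (((hasDerivAt_const t C).sub (hlog.const_mul (A / 2))).sub hquot).congr_deriv ?_
  rw [hu, cubic]
  field_simp
  ring

end ProfileLikelihood

end

open ProfileLikelihood in
theorem eta_stationary_iff_P_root_general (σ11 σ22 A s11 s12 s22 C : ℝ) :
    ∀ t : ℝ, -Real.sqrt (σ11 * σ22) < t → t < Real.sqrt (σ11 * σ22) →
      (deriv (fun t : ℝ =>
          C - (A / 2) * Real.log (σ22 - t ^ 2 / σ11)
            - (s22 - 2 * (t / σ11) * s12 + (t ^ 2 / σ11 ^ 2) * s11)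
              / (2 * (σ22 - t ^ 2 / σ11))) t = 0
        ↔ s12 * σ11 * σ22 + (σ11 * σ22 * A - s22 * σ11 - s11 * σ22) * t
            + s12 * t ^ 2 - A * t ^ 3 = 0) := by
  intro t ht₁ ht₂
  have ht : t ^ 2 < σ11 * σ22 := Real.sq_lt.2 ⟨ht₁, ht₂⟩
  have hσ11 : σ11 ≠ 0 := by
    rintro rfl
    exact (sq_nonneg t).not_gt (by simpa using ht)
  change deriv (eta σ11 σ22 A s11 s12 s22 C) t = 0 ↔ cubic σ11 σ22 A s11 s12 s22 t = 0
  rw [(hasDerivAt_eta hσ11 ht.ne).deriv, div_eq_zero_iff,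
    or_iff_left (pow_ne_zero 2 (sub_pos.2 ht).ne')]

/-- Theorems 2 and 4 of the paper: inside the positive-definiteness region
`t ∈ (−√(σ₁₁σ₂₂), √(σ₁₁σ₂₂))`, the stationary points of the profile log-likelihood `η`
are exactly the roots of the cubic polynomial `P`. -/
theorem eta_stationary_iff_P_root (σ11 σ22 A s11 s12 s22 C : ℝ)
    (h11 : 0 < σ11) (h22 : 0 < σ22) :
    ∀ t : ℝ, -Real.sqrt (σ11 * σ22) < t → t < Real.sqrt (σ11 * σ22) →
      (deriv (fun t : ℝ =>
          C - (A / 2) * Real.log (σ22 - t ^ 2 / σ11)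
            - (s22 - 2 * (t / σ11) * s12 + (t ^ 2 / σ11 ^ 2) * s11)
              / (2 * (σ22 - t ^ 2 / σ11))) t = 0
        ↔ s12 * σ11 * σ22 + (σ11 * σ22 * A - s22 * σ11 - s11 * σ22) * t
            + s12 * t ^ 2 - A * t ^ 3 = 0) :=
  eta_stationary_iff_P_root_general σ11 σ22 A s11 s12 s22 C
end

section
/- Let σ₁₁ > 0, σ₂₂ > 0, and let A, s₁₁, s₁₂, s₂₂, C be real numbers. For t ∈ ℝ with t² < σ₁₁σ₂₂, define η(t) = C − (A/2) log(σ₂₂ − t²/σ₁₁) − (s₂₂ − 2(t/σ₁₁) s₁₂ + (t²/σ₁₁²) s₁₁) / (2(σ₂₂ − t²/σ₁₁)), and define P(t) = s₁₂ σ₁₁ σ₂₂ + (σ₁₁ σ₂₂ A − s₂₂ σ₁₁ − s₁₁ σ₂₂) t + s₁₂ t² − A t³. If t* ∈ (−√(σ₁₁σ₂₂), √(σ₁₁σ₂₂)) satisfies η(t*) ≥ η(t) for all t ∈ (−√(σ₁₁σ₂₂), √(σ₁₁σ₂₂)), then P(t*) = 0. -/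
open Real

/-!
The profile log-likelihood is differentiable wherever `t² ≠ σ₁₁σ₂₂`, with derivative
`η'(t) = P(t) / (σ₁₁σ₂₂ - t²)²`. A maximizer over the open interval is an interior local
maximum, so `η'(t*) = 0`, and the denominator does not vanish there.
-/

noncomputable def profileLogLik (σ11 σ22 A s11 s12 s22 C t : ℝ) : ℝ :=
  C - (A / 2) * Real.log (σ22 - t ^ 2 / σ11)
    - (s22 - 2 * (t / σ11) * s12 + (t ^ 2 / σ11 ^ 2) * s11) / (2 * (σ22 - t ^ 2 / σ11))

def scoreCubic (σ11 σ22 A s11 s12 s22 t : ℝ) : ℝ :=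
  s12 * σ11 * σ22 + (σ11 * σ22 * A - s22 * σ11 - s11 * σ22) * t + s12 * t ^ 2 - A * t ^ 3

theorem hasDerivAt_profileLogLik {σ11 σ22 A s11 s12 s22 C t : ℝ} (h11 : σ11 ≠ 0)
    (ht : σ11 * σ22 - t ^ 2 ≠ 0) :
    HasDerivAt (profileLogLik σ11 σ22 A s11 s12 s22 C)
      (scoreCubic σ11 σ22 A s11 s12 s22 t / (σ11 * σ22 - t ^ 2) ^ 2) t := by
  have hu : σ22 - t ^ 2 / σ11 ≠ 0 := by
    rw [sub_ne_zero, ne_eq, eq_div_iff h11]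
    exact fun h => ht (by linarith)
  have hu' : HasDerivAt (fun t : ℝ => σ22 - t ^ 2 / σ11) (-(2 * t / σ11)) t :=
    ((hasDerivAt_const t σ22).sub ((hasDerivAt_pow 2 t).div_const σ11)).congr_deriv (by ring)
  have hN : HasDerivAt (fun t : ℝ => s22 - 2 * (t / σ11) * s12 + (t ^ 2 / σ11 ^ 2) * s11)
      (2 * t * s11 / σ11 ^ 2 - 2 * s12 / σ11) t :=
    (((hasDerivAt_const t s22).sub
      (((hasDerivAt_id t).div_const σ11).const_mul 2 |>.mul_const s12)).add
      (((hasDerivAt_pow 2 t).div_const (σ11 ^ 2)).mul_const s11)).congr_deriv (by ring)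
  refine (((hasDerivAt_const t C).sub ((hu'.log hu).const_mul (A / 2))).sub
    (hN.div (hu'.const_mul 2) (mul_ne_zero two_ne_zero hu))).congr_deriv ?_
  unfold scoreCubic
  field_simp
  ring

theorem maximizer_is_root_of_P_general (σ11 σ22 A s11 s12 s22 C : ℝ)
    (h11 : 0 < σ11) (tstar : ℝ)
    (h1 : -Real.sqrt (σ11 * σ22) < tstar) (h2 : tstar < Real.sqrt (σ11 * σ22))
    (hmax : ∀ t : ℝ, -Real.sqrt (σ11 * σ22) < t → t < Real.sqrt (σ11 * σ22) →
      (C - (A / 2) * Real.log (σ22 - t ^ 2 / σ11)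
          - (s22 - 2 * (t / σ11) * s12 + (t ^ 2 / σ11 ^ 2) * s11)
            / (2 * (σ22 - t ^ 2 / σ11)))
        ≤ C - (A / 2) * Real.log (σ22 - tstar ^ 2 / σ11)
          - (s22 - 2 * (tstar / σ11) * s12 + (tstar ^ 2 / σ11 ^ 2) * s11)
            / (2 * (σ22 - tstar ^ 2 / σ11))) :
    s12 * σ11 * σ22 + (σ11 * σ22 * A - s22 * σ11 - s11 * σ22) * tstar
      + s12 * tstar ^ 2 - A * tstar ^ 3 = 0 := by
  have hD : σ11 * σ22 - tstar ^ 2 ≠ 0 := (sub_pos.2 (Real.sq_lt.2 ⟨h1, h2⟩)).ne'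
  have hloc : IsLocalMax (profileLogLik σ11 σ22 A s11 s12 s22 C) tstar :=
    Filter.mem_of_superset (Ioo_mem_nhds h1 h2) fun t ht => hmax t ht.1 ht.2
  have hderiv := hloc.hasDerivAt_eq_zero (hasDerivAt_profileLogLik h11.ne' hD)
  exact (div_eq_zero_iff.1 hderiv).resolve_right (pow_ne_zero 2 hD)

/-- Theorems 2 and 4 of the paper ("estimation of σ₁₂ reduces to finding the roots of
P"): any maximizer `t*` of the profile log-likelihood `η` over the open interval
`(−√(σ₁₁σ₂₂), √(σ₁₁σ₂₂))` of off-diagonal entries for which the covariance matrix is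
positive definite must be a root of the cubic polynomial `P`. -/
theorem maximizer_is_root_of_P (σ11 σ22 A s11 s12 s22 C : ℝ)
    (h11 : 0 < σ11) (h22 : 0 < σ22) (tstar : ℝ)
    (h1 : -Real.sqrt (σ11 * σ22) < tstar) (h2 : tstar < Real.sqrt (σ11 * σ22))
    (hmax : ∀ t : ℝ, -Real.sqrt (σ11 * σ22) < t → t < Real.sqrt (σ11 * σ22) →
      (C - (A / 2) * Real.log (σ22 - t ^ 2 / σ11)
          - (s22 - 2 * (t / σ11) * s12 + (t ^ 2 / σ11 ^ 2) * s11)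
            / (2 * (σ22 - t ^ 2 / σ11)))
        ≤ C - (A / 2) * Real.log (σ22 - tstar ^ 2 / σ11)
          - (s22 - 2 * (tstar / σ11) * s12 + (tstar ^ 2 / σ11 ^ 2) * s11)
            / (2 * (σ22 - tstar ^ 2 / σ11))) :
    s12 * σ11 * σ22 + (σ11 * σ22 * A - s22 * σ11 - s11 * σ22) * tstar
      + s12 * tstar ^ 2 - A * tstar ^ 3 = 0 :=
  maximizer_is_root_of_P_general σ11 σ22 A s11 s12 s22 C h11 tstar h1 h2 hmax
end
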